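/- arXiv:2107.00496 — 2 statements merged into one kernel-verified Lean document; each statement's English description precedes it below -/
import Mathlib

section
/- Let V be a nonnegative locally L^q function on ℝ^n (q > 1) satisfying the reverse Hölder inequality: there is C₀ > 0 such that for every ball B, (|B|⁻¹ ∫_B V^q)^{1/q} ≤ C₀ |B|⁻¹ ∫_B V. Then there exists a constant C > 0 (depending only on n, q, C₀) such that for all x ∈ ℝ^n and all 0 < r < R, one has r^{2-n} ∫_{B(x,r)} V(y) dy ≤ C (R/r)^{n/q - 2} · R^{2-n} ∫_{B(x,R)} V(y) dy. -/
open MeasureTheory Metric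

/-- Hölder with exponent `q` against the constant function `1`, for a finite measure. -/
lemma holder_one {α : Type*} [MeasurableSpace α] (μ : Measure α) [IsFiniteMeasure μ]
    {q : ℝ} (hq : 1 < q) {f : α → ℝ} (hf0 : ∀ a, 0 ≤ f a)
    (hfq : Integrable (fun a => f a ^ q) μ) :
    ∫ a, f a ∂μ ≤ (∫ a, f a ^ q ∂μ) ^ (1 / q) * (μ Set.univ).toReal ^ (1 - 1 / q) := by
  have hq0 : 0 < q := lt_trans one_pos hq
  have hmeas : AEMeasurable f μ := by
    have h1 : AEMeasurable (fun a => (f a ^ q) ^ q⁻¹) μ :=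
      (Real.continuous_rpow_const (inv_nonneg.2 hq0.le)).measurable.comp_aemeasurable
        hfq.aemeasurable
    have : (fun a => (f a ^ q) ^ q⁻¹) = f := by
      funext a; exact Real.rpow_rpow_inv (hf0 a) hq0.ne'
    rwa [this] at h1
  have hg : AEMeasurable (fun a => ENNReal.ofReal (f a)) μ :=
    ENNReal.measurable_ofReal.comp_aemeasurable hmeas
  have hq' : q.HolderConjugate (q / (q - 1)) := Real.HolderConjugate.conjExponent hq
  have key := ENNReal.lintegral_mul_le_Lp_mul_Lq μ hq' hg
    (aemeasurable_const (b := (1 : ENNReal)))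
  simp only [Pi.mul_apply, mul_one, ENNReal.one_rpow, lintegral_const, one_mul] at key
  have hA : ∫⁻ a, ENNReal.ofReal (f a) ^ q ∂μ = ENNReal.ofReal (∫ a, f a ^ q ∂μ) := by
    rw [ofReal_integral_eq_lintegral_ofReal hfq
      (Filter.Eventually.of_forall fun a => Real.rpow_nonneg (hf0 a) q)]
    exact lintegral_congr fun a => ENNReal.ofReal_rpow_of_nonneg (hf0 a) hq0.le
  rw [hA] at key
  have hIq : 0 ≤ ∫ a, f a ^ q ∂μ :=
    integral_nonneg fun a => Real.rpow_nonneg (hf0 a) q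
  have hRHS : (ENNReal.ofReal (∫ a, f a ^ q ∂μ)) ^ (1 / q) *
      (μ Set.univ) ^ (1 / (q / (q - 1))) ≠ ⊤ := by
    apply ENNReal.mul_ne_top
    · exact ENNReal.rpow_ne_top_of_nonneg (by positivity) ENNReal.ofReal_ne_top
    · exact ENNReal.rpow_ne_top_of_nonneg (one_div_nonneg.2 hq'.symm.pos.le) (measure_ne_top μ _)
  have hint : ∫ a, f a ∂μ = (∫⁻ a, ENNReal.ofReal (f a) ∂μ).toReal :=
    integral_eq_lintegral_of_nonneg_ae (Filter.Eventually.of_forall hf0)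
      hmeas.aestronglyMeasurable
  rw [hint]
  calc (∫⁻ a, ENNReal.ofReal (f a) ∂μ).toReal
      ≤ ((ENNReal.ofReal (∫ a, f a ^ q ∂μ)) ^ (1 / q) *
          (μ Set.univ) ^ (1 / (q / (q - 1)))).toReal := ENNReal.toReal_mono hRHS key
    _ = (∫ a, f a ^ q ∂μ) ^ (1 / q) * (μ Set.univ).toReal ^ (1 - 1 / q) := by
        rw [ENNReal.toReal_mul, ← ENNReal.toReal_rpow, ← ENNReal.toReal_rpow,
          ENNReal.toReal_ofReal hIq]
        congr 2
        rw [one_div (q / (q - 1)), inv_div]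
        field_simp
  
theorem stmt0 (n : ℕ) (q C₀ : ℝ) (hq : 1 < q) (hC₀ : 0 < C₀)
    (V : EuclideanSpace ℝ (Fin n) → ℝ) (hVnonneg : ∀ x, 0 ≤ V x)
    (hVloc : ∀ (x : EuclideanSpace ℝ (Fin n)) (r : ℝ), 0 < r →
      IntegrableOn (fun y => V y ^ q) (ball x r) volume)
    (hRH : ∀ (x : EuclideanSpace ℝ (Fin n)) (r : ℝ), 0 < r →
      ((volume (ball x r)).toReal⁻¹ * ∫ y in ball x r, V y ^ q) ^ (1 / q)
        ≤ C₀ * ((volume (ball x r)).toReal⁻¹ * ∫ y in ball x r, V y)) :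
    ∃ C > 0, ∀ (x : EuclideanSpace ℝ (Fin n)) (r R : ℝ), 0 < r → r < R →
      r ^ (2 - (n : ℝ)) * ∫ y in ball x r, V y ≤
        C * (R / r) ^ ((n : ℝ) / q - 2) *
          (R ^ (2 - (n : ℝ)) * ∫ y in ball x R, V y) := by
  refine ⟨C₀, hC₀, fun x r R hr hrR => ?_⟩
  have hq0 : 0 < q := lt_trans one_pos hq
  have hR : 0 < R := hr.trans hrR
  set a := ∫ y in ball x r, V y with ha
  set b := ∫ y in ball x R, V y with hb
  set A := ∫ y in ball x R, V y ^ q with hA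
  set Ar := ∫ y in ball x r, V y ^ q with hAr
  set m := (volume (ball x r)).toReal with hm
  set M := (volume (ball x R)).toReal with hM
  have hm0 : 0 < m := by
    rw [hm]; exact ENNReal.toReal_pos (measure_ball_pos volume x hr).ne' measure_ball_lt_top.ne
  have hM0 : 0 < M := by
    rw [hM]; exact ENNReal.toReal_pos (measure_ball_pos volume x hR).ne' measure_ball_lt_top.ne
  have hb0 : 0 ≤ b := setIntegral_nonneg measurableSet_ball fun y _ => hVnonneg y
  have hA0 : 0 ≤ A := setIntegral_nonneg measurableSet_ball fun y _ => Real.rpow_nonneg (hVnonneg y) q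
  have hAr0 : 0 ≤ Ar := setIntegral_nonneg measurableSet_ball fun y _ => Real.rpow_nonneg (hVnonneg y) q
  -- Step 1: Hölder on the small ball
  haveI : IsFiniteMeasure (volume.restrict (ball x r)) :=
    ⟨by rw [Measure.restrict_apply_univ]; exact measure_ball_lt_top⟩
  have step1 : a ≤ Ar ^ (1 / q) * m ^ (1 - 1 / q) := by
    have := holder_one (volume.restrict (ball x r)) hq hVnonneg (hVloc x r hr)
    rwa [Measure.restrict_apply_univ] at this
  -- Step 2: monotonicity of the integral of V^q
  have step2 : Ar ≤ A := by
    apply setIntegral_mono_set (hVloc x R hR)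
      (Filter.Eventually.of_forall fun y => Real.rpow_nonneg (hVnonneg y) q)
    exact HasSubset.Subset.eventuallyLE (ball_subset_ball hrR.le)
  -- Step 3: reverse Hölder on the big ball
  have step3 : A ^ (1 / q) ≤ C₀ * M ^ ((1:ℝ) / q - 1) * b := by
    have hrh := hRH x R hR
    rw [Real.mul_rpow (by positivity) hA0] at hrh
    have h2 : A ^ (1 / q) = M ^ ((1:ℝ)/q) * ((M⁻¹) ^ ((1:ℝ)/q) * A ^ ((1:ℝ)/q)) := by
      rw [← mul_assoc, ← Real.mul_rpow hM0.le (by positivity),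
        mul_inv_cancel₀ hM0.ne', Real.one_rpow, one_mul]
    rw [h2]
    calc M ^ ((1:ℝ)/q) * ((M⁻¹) ^ ((1:ℝ)/q) * A ^ ((1:ℝ)/q))
        ≤ M ^ ((1:ℝ)/q) * (C₀ * (M⁻¹ * b)) := by
          apply mul_le_mul_of_nonneg_left hrh (by positivity)
      _ = C₀ * (M ^ ((1:ℝ)/q) * M⁻¹) * b := by ring
      _ = C₀ * M ^ ((1:ℝ)/q - 1) * b := by
          rw [Real.rpow_sub hM0, Real.rpow_one]; ring
  -- combine
  have key : a ≤ C₀ * (M ^ ((1:ℝ)/q - 1) * m ^ (1 - 1/q)) * b := by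
    calc a ≤ Ar ^ (1 / q) * m ^ (1 - 1 / q) := step1
      _ ≤ A ^ (1 / q) * m ^ (1 - 1 / q) := by
          apply mul_le_mul_of_nonneg_right
            (Real.rpow_le_rpow hAr0 step2 (by positivity)) (by positivity)
      _ ≤ (C₀ * M ^ ((1:ℝ) / q - 1) * b) * m ^ (1 - 1 / q) := by
          apply mul_le_mul_of_nonneg_right step3 (by positivity)
      _ = C₀ * (M ^ ((1:ℝ)/q - 1) * m ^ (1 - 1/q)) * b := by ring
  -- compute the volume ratio
  set c := (volume (ball (0 : EuclideanSpace ℝ (Fin n)) 1)).toReal with hc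
  have hc0 : 0 < c := by
    rw [hc]
    exact ENNReal.toReal_pos (measure_ball_pos volume _ one_pos).ne' measure_ball_lt_top.ne
  have hball : ∀ ρ : ℝ, 0 < ρ → (volume (ball x ρ)).toReal = ρ ^ n * c := by
    intro ρ hρ
    rw [Measure.addHaar_ball_of_pos volume x hρ, ENNReal.toReal_mul,
      ENNReal.toReal_ofReal (by positivity), finrank_euclideanSpace_fin]
  have hmval : m = r ^ n * c := by rw [hm, hball r hr]
  have hMval : M = R ^ n * c := by rw [hM, hball R hR]
  -- the exponent identity
  have hratio : M ^ ((1:ℝ)/q - 1) * m ^ (1 - 1/q) = (r / R) ^ ((n:ℝ) * (1 - 1/q)) := by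
    have h1 : M ^ ((1:ℝ)/q - 1) = (M ^ ((1:ℝ) - 1/q))⁻¹ := by
      rw [show (1:ℝ)/q - 1 = -(1 - 1/q) by ring, Real.rpow_neg hM0.le]
    rw [h1, inv_mul_eq_div, ← Real.div_rpow hm0.le hM0.le]
    have h2 : m / M = (r / R) ^ (n:ℝ) := by
      rw [hmval, hMval, mul_div_mul_right _ _ hc0.ne', ← div_pow, Real.rpow_natCast]
    rw [h2, ← Real.rpow_mul (by positivity)]
  have hid : r ^ (2 - (n:ℝ)) * (r / R) ^ ((n:ℝ) * (1 - 1/q)) =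
      (R / r) ^ ((n : ℝ) / q - 2) * R ^ (2 - (n : ℝ)) := by
    rw [Real.rpow_def_of_pos hr, Real.rpow_def_of_pos hR,
      Real.rpow_def_of_pos (div_pos hr hR), Real.rpow_def_of_pos (div_pos hR hr),
      ← Real.exp_add, ← Real.exp_add, Real.exp_eq_exp,
      Real.log_div hr.ne' hR.ne', Real.log_div hR.ne' hr.ne']
    ring
  calc r ^ (2 - (n : ℝ)) * a
      ≤ r ^ (2 - (n : ℝ)) * (C₀ * (M ^ ((1:ℝ)/q - 1) * m ^ (1 - 1/q)) * b) := by
        apply mul_le_mul_of_nonneg_left key (by positivity)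
    _ = C₀ * (r ^ (2 - (n:ℝ)) * (r / R) ^ ((n:ℝ) * (1 - 1/q))) * b := by
        rw [hratio]; ring
    _ = C₀ * ((R / r) ^ ((n : ℝ) / q - 2) * R ^ (2 - (n : ℝ))) * b := by rw [hid]
    _ = C₀ * (R / r) ^ ((n : ℝ) / q - 2) * (R ^ (2 - (n : ℝ)) * b) := by ring
end

section
/- Let n ≥ 3, 0 < ε < 2, and V(x) = |x|^{ε−2} on ℝ^n. Define ρ(x) = sup { r > 0 : r^{2−n} ∫_{B(x,r)} V(y) dy ≤ 1 }. Then there exist constants 0 < c₁ ≤ c₂ and R₀ > 1 such that for all |x| ≥ R₀, c₁ |x|^{1−ε/2} ≤ ρ(x) ≤ c₂ |x|^{1−ε/2}. -/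
open MeasureTheory Metric

lemma measurable_norm_rpow {E : Type*} [NormedAddCommGroup E] [MeasurableSpace E]
    [OpensMeasurableSpace E] (p : ℝ) (hp : p ≠ 0) :
    Measurable fun y : E => ‖y‖ ^ p := by
  have : (fun y : E => ‖y‖ ^ p)
      = fun y : E => if ‖y‖ = 0 then 0 else Real.exp (Real.log ‖y‖ * p) := by
    funext y
    rcases eq_or_ne ‖y‖ 0 with h | h
    · simp [h, Real.zero_rpow hp]
    · have hy : 0 < ‖y‖ := lt_of_le_of_ne (norm_nonneg y) (Ne.symm h)
      simp [h, Real.rpow_def_of_pos hy]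
  rw [this]
  exact Measurable.ite (measurable_norm (measurableSet_singleton (0:ℝ)))
    measurable_const
    (Real.measurable_exp.comp ((Real.measurable_log.comp measurable_norm).mul measurable_const))

lemma ball_cover (S : ℝ) (hS : 0 < S) {E : Type*} [NormedAddCommGroup E] :
    ball (0:E) S ⊆ {0} ∪ ⋃ k : ℕ, (ball (0:E) (S / 2^k) \ ball 0 (S / 2^(k+1))) := by
  intro y hy
  rcases eq_or_ne y 0 with h | h
  · exact Or.inl h
  right
  have hy0 : 0 < ‖y‖ := norm_pos_iff.2 h
  have hyS : ‖y‖ < S := by simpa [mem_ball, dist_eq_norm] using hy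
  have hex : ∃ m : ℕ, S / 2^(m+1) ≤ ‖y‖ := by
    obtain ⟨m, hm⟩ := pow_unbounded_of_one_lt (S / ‖y‖) (one_lt_two (α := ℝ))
    refine ⟨m, ?_⟩
    have h1 : S / 2^m < ‖y‖ := by
      rw [div_lt_iff₀ (by positivity)]
      calc S = (S / ‖y‖) * ‖y‖ := by field_simp
      _ < 2^m * ‖y‖ := by nlinarith
      _ = ‖y‖ * 2^m := by ring
    have h2 : S / 2^(m+1) ≤ S / 2^m := by
      apply div_le_div_of_nonneg_left hS.le (by positivity)
      exact pow_le_pow_right₀ one_le_two (Nat.le_succ m)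
    linarith
  classical
  refine Set.mem_iUnion.2 ⟨Nat.find hex, ?_, ?_⟩
  · simp only [mem_ball, dist_eq_norm, sub_zero]
    rcases Nat.eq_zero_or_pos (Nat.find hex) with hk | hk
    · simpa [hk] using hyS
    · obtain ⟨j, hj⟩ := Nat.exists_eq_add_of_lt hk
      have hmin := Nat.find_min hex (m := j) (by omega)
      push_neg at hmin
      have hkj : Nat.find hex = j + 1 := by omega
      rw [hkj]; exact hmin
  · simp only [mem_ball, dist_eq_norm, sub_zero, not_lt]
    exact Nat.find_spec hex

lemma integrableOn_norm_rpow_ball {E : Type*} [NormedAddCommGroup E] [NormedSpace ℝ E]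
    [MeasurableSpace E] [BorelSpace E] [FiniteDimensional ℝ E] [Nontrivial E]
    (μ : Measure E) [μ.IsAddHaarMeasure] {p : ℝ} (hp0 : p < 0)
    (hpn : -(Module.finrank ℝ E : ℝ) < p) (x : E) (R : ℝ) :
    IntegrableOn (fun y => ‖y‖ ^ p) (ball x R) μ := by
  have hmeas : Measurable fun y : E => ‖y‖ ^ p := measurable_norm_rpow p hp0.ne
  suffices h : ∀ S : ℝ, 0 < S → IntegrableOn (fun y : E => ‖y‖ ^ p) (ball (0:E) S) μ by
    have hsub : ball x R ⊆ ball (0:E) (‖x‖ + |R| + 1) := by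
      intro y hy
      simp only [mem_ball, dist_eq_norm] at *
      have h1 : ‖y‖ ≤ ‖x‖ + ‖y - x‖ := by
        have h2 : x + (y - x) = y := by abel
        calc ‖y‖ = ‖x + (y - x)‖ := by rw [h2]
        _ ≤ ‖x‖ + ‖y - x‖ := norm_add_le _ _
      have hR : R ≤ |R| := le_abs_self R
      simp only [sub_zero]
      linarith
    exact (h _ (by positivity)).mono_set hsub
  intro S hS
  set n := Module.finrank ℝ E with hn
  constructor
  · exact hmeas.aestronglyMeasurable.restrict
  rw [hasFiniteIntegral_iff_norm]
  have hBfin : μ (ball (0:E) 1) < ⊤ := measure_ball_lt_top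
  have h2p : (0:ℝ) < (2:ℝ) ^ p := Real.rpow_pos_of_pos two_pos p
  have hterm : ∀ k : ℕ,
      (∫⁻ y in (ball (0:E) (S / 2^k) \ ball 0 (S / 2^(k+1))), ENNReal.ofReal ‖(‖y‖ ^ p)‖ ∂μ)
        ≤ ENNReal.ofReal ((S / 2^(k+1)) ^ p * (S / 2^k) ^ n) * μ (ball (0:E) 1) := by
    intro k
    have hb : ∀ y ∈ (ball (0:E) (S / 2^k) \ ball 0 (S / 2^(k+1))),
        ENNReal.ofReal ‖(‖y‖ ^ p)‖ ≤ ENNReal.ofReal ((S / 2^(k+1)) ^ p) := by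
      intro y hy
      apply ENNReal.ofReal_le_ofReal
      have hylb : S / 2^(k+1) ≤ ‖y‖ := by
        have := hy.2
        simpa [mem_ball, dist_eq_norm, not_lt] using this
      have h1 : (0:ℝ) < S / 2^(k+1) := by positivity
      rw [Real.norm_of_nonneg (Real.rpow_nonneg (norm_nonneg y) p)]
      exact Real.rpow_le_rpow_of_nonpos h1 hylb hp0.le
    calc (∫⁻ y in (ball (0:E) (S / 2^k) \ ball 0 (S / 2^(k+1))), ENNReal.ofReal ‖(‖y‖ ^ p)‖ ∂μ)
        ≤ ∫⁻ _ in (ball (0:E) (S / 2^k) \ ball 0 (S / 2^(k+1))),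
            ENNReal.ofReal ((S / 2^(k+1)) ^ p) ∂μ := setLIntegral_mono measurable_const hb
      _ = ENNReal.ofReal ((S / 2^(k+1)) ^ p)
            * μ (ball (0:E) (S / 2^k) \ ball 0 (S / 2^(k+1))) := setLIntegral_const _ _
      _ ≤ ENNReal.ofReal ((S / 2^(k+1)) ^ p) * μ (ball (0:E) (S / 2^k)) :=
          mul_le_mul_right (measure_mono Set.diff_subset) _
      _ = ENNReal.ofReal ((S / 2^(k+1)) ^ p) * (ENNReal.ofReal ((S / 2^k) ^ n) * μ (ball (0:E) 1)) := by
          rw [Measure.addHaar_ball _ _ (by positivity : (0:ℝ) ≤ S / 2^k)]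
      _ = ENNReal.ofReal ((S / 2^(k+1)) ^ p * (S / 2^k) ^ n) * μ (ball (0:E) 1) := by
          rw [← mul_assoc, ← ENNReal.ofReal_mul (Real.rpow_nonneg (by positivity) p)]
  -- geometric bound on the coefficients
  have hstep : ∀ k : ℕ, (S / 2^(k+1)) ^ p * (S / 2^k) ^ n
      = ((S / 2) ^ p * S ^ n) * (((2:ℝ) ^ p * 2 ^ n)⁻¹) ^ k := by
    intro k
    induction k with
    | zero => simp
    | succ k ih =>
      have e1 : S / 2^(k+2) = (S / 2^(k+1)) / 2 := by ring
      have e2 : S / 2^(k+1) = (S / 2^k) / 2 := by ring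
      have e3 : ((S / 2^(k+1)) / 2) ^ p = (S / 2^(k+1)) ^ p / 2 ^ p :=
        Real.div_rpow (by positivity) (by norm_num) p
      calc (S / 2^(k+1+1)) ^ p * (S / 2^(k+1)) ^ n
          = ((S / 2^(k+1)) ^ p / 2 ^ p) * ((S / 2^k) ^ n / 2 ^ n) := by
            rw [show (k+1+1) = k+2 from rfl, e1, e3]
            rw [e2, div_pow]
        _ = ((S / 2^(k+1)) ^ p * (S / 2^k) ^ n) * ((2:ℝ) ^ p * 2 ^ n)⁻¹ := by
            field_simp
        _ = ((S / 2) ^ p * S ^ n) * (((2:ℝ) ^ p * 2 ^ n)⁻¹) ^ (k+1) := by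
            rw [ih]; ring
  have hq1 : ENNReal.ofReal (((2:ℝ) ^ p * 2 ^ n)⁻¹) < 1 := by
    rw [ENNReal.ofReal_lt_one]
    rw [inv_lt_one_iff₀]
    right
    have h1 : (1:ℝ) < 2 ^ (p + n) := by
      refine (Real.one_lt_rpow_iff_of_pos two_pos).2 (Or.inl ⟨one_lt_two, ?_⟩)
      have hnp : 0 < n := Module.finrank_pos
      have : (0:ℝ) < n := by exact_mod_cast hnp
      linarith [hpn]
    calc (1:ℝ) < 2 ^ (p + (n:ℝ)) := h1
    _ = 2 ^ p * 2 ^ (n:ℝ) := Real.rpow_add two_pos _ _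
    _ = 2 ^ p * 2 ^ n := by rw [Real.rpow_natCast]
  calc (∫⁻ y in ball (0:E) S, ENNReal.ofReal ‖(‖y‖ ^ p)‖ ∂μ)
      ≤ ∫⁻ y in ({0} ∪ ⋃ k : ℕ, (ball (0:E) (S / 2^k) \ ball 0 (S / 2^(k+1)))),
          ENNReal.ofReal ‖(‖y‖ ^ p)‖ ∂μ := lintegral_mono_set (ball_cover S hS)
    _ ≤ (∫⁻ y in ({(0:E)} : Set E), ENNReal.ofReal ‖(‖y‖ ^ p)‖ ∂μ)
        + ∫⁻ y in (⋃ k : ℕ, (ball (0:E) (S / 2^k) \ ball 0 (S / 2^(k+1)))),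
          ENNReal.ofReal ‖(‖y‖ ^ p)‖ ∂μ := lintegral_union_le _ _ _
    _ ≤ 0 + ∑' k : ℕ, ∫⁻ y in (ball (0:E) (S / 2^k) \ ball 0 (S / 2^(k+1))),
          ENNReal.ofReal ‖(‖y‖ ^ p)‖ ∂μ := by
        gcongr
        · rw [show μ.restrict {(0:E)} = 0 from by
            simp [Measure.restrict_eq_zero, measure_singleton]]
          simp
        · exact lintegral_iUnion_le _ _
    _ ≤ ∑' k : ℕ, ENNReal.ofReal (((S / 2) ^ p * S ^ n) * (((2:ℝ) ^ p * 2 ^ n)⁻¹) ^ k)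
          * μ (ball (0:E) 1) := by
        rw [zero_add]
        refine ENNReal.tsum_le_tsum fun k => ?_
        rw [← hstep k]
        exact hterm k
    _ = ∑' k : ℕ, ENNReal.ofReal ((S / 2) ^ p * S ^ n)
          * (ENNReal.ofReal (((2:ℝ) ^ p * 2 ^ n)⁻¹)) ^ k * μ (ball (0:E) 1) := by
        congr 1
        funext k
        rw [← ENNReal.ofReal_pow (by positivity), ← ENNReal.ofReal_mul (by positivity)]
    _ = (ENNReal.ofReal ((S / 2) ^ p * S ^ n)
          * ∑' k : ℕ, (ENNReal.ofReal (((2:ℝ) ^ p * 2 ^ n)⁻¹)) ^ k) * μ (ball (0:E) 1) := by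
        rw [ENNReal.tsum_mul_right, ENNReal.tsum_mul_left]
    _ < ⊤ := by
        apply ENNReal.mul_lt_top _ hBfin
        apply ENNReal.mul_lt_top ENNReal.ofReal_lt_top
        rw [ENNReal.tsum_geometric]
        rw [ENNReal.inv_lt_top]
        exact tsub_pos_of_lt hq1

section helpers
variable {n : ℕ}

local notation "E" => EuclideanSpace ℝ (Fin n)

lemma nontriv_E (hn : 1 ≤ n) : Nontrivial E :=
  Module.nontrivial_of_finrank_pos (R := ℝ) (by rw [finrank_euclideanSpace_fin]; omega)

lemma vol_ball_toReal (hn : 1 ≤ n) (x : E) {r : ℝ} (hr : 0 ≤ r) :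
    (volume (ball x r)).toReal = r ^ n * (volume (ball (0:E) 1)).toReal := by
  have := nontriv_E hn
  rw [Measure.addHaar_ball _ _ hr, ENNReal.toReal_mul,
    ENNReal.toReal_ofReal (by positivity), finrank_euclideanSpace_fin]

lemma integral_ball_le (hn : 3 ≤ n) {p : ℝ} (hp0 : p < 0) (hpn : -(n:ℝ) < p)
    (x : E) {r m : ℝ} (hm : 0 < m)
    (h : ∀ y ∈ ball x r, m ≤ ‖y‖) :
    ∫ y in ball x r, ‖y‖ ^ p ≤ (volume (ball x r)).toReal * m ^ p := by
  have := nontriv_E (by omega : 1 ≤ n)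
  have hInt : IntegrableOn (fun y : E => ‖y‖ ^ p) (ball x r) volume := by
    have := integrableOn_norm_rpow_ball (μ := (volume : Measure (EuclideanSpace ℝ (Fin n)))) hp0
      (by rw [finrank_euclideanSpace_fin]; exact hpn) x r
    exact this
  calc ∫ y in ball x r, ‖y‖ ^ p ≤ ∫ _ in ball x r, m ^ p := by
        refine setIntegral_mono_on hInt
          (integrableOn_const measure_ball_lt_top.ne) measurableSet_ball ?_
        intro y hy
        exact Real.rpow_le_rpow_of_nonpos hm (h y hy) hp0.le
    _ = (volume (ball x r)).toReal * m ^ p := by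
        rw [setIntegral_const, smul_eq_mul]
        rfl

lemma le_integral_ball (hn : 3 ≤ n) {p : ℝ} (hp0 : p < 0) (hpn : -(n:ℝ) < p)
    (x : E) {r M : ℝ} (hM : 0 < M)
    (h : ∀ y ∈ ball x r, 0 < ‖y‖ ∧ ‖y‖ ≤ M) :
    (volume (ball x r)).toReal * M ^ p ≤ ∫ y in ball x r, ‖y‖ ^ p := by
  have := nontriv_E (by omega : 1 ≤ n)
  have hInt : IntegrableOn (fun y : E => ‖y‖ ^ p) (ball x r) volume := by
    have := integrableOn_norm_rpow_ball (μ := (volume : Measure (EuclideanSpace ℝ (Fin n)))) hp0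
      (by rw [finrank_euclideanSpace_fin]; exact hpn) x r
    exact this
  calc (volume (ball x r)).toReal * M ^ p = ∫ _ in ball x r, M ^ p := by
        rw [setIntegral_const, smul_eq_mul]
        rfl
    _ ≤ ∫ y in ball x r, ‖y‖ ^ p := by
        refine setIntegral_mono_on
          (integrableOn_const measure_ball_lt_top.ne) hInt measurableSet_ball ?_
        intro y hy
        exact Real.rpow_le_rpow_of_nonpos (h y hy).1 (h y hy).2 hp0.le

lemma integral_ball_mono (hn : 3 ≤ n) {p : ℝ} (hp0 : p < 0) (hpn : -(n:ℝ) < p)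
    {x x' : E} {r r' : ℝ} (hsub : ball x' r' ⊆ ball x r) :
    ∫ y in ball x' r', ‖y‖ ^ p ≤ ∫ y in ball x r, ‖y‖ ^ p := by
  have := nontriv_E (by omega : 1 ≤ n)
  have hInt : IntegrableOn (fun y : E => ‖y‖ ^ p) (ball x r) volume := by
    have := integrableOn_norm_rpow_ball (μ := (volume : Measure (EuclideanSpace ℝ (Fin n)))) hp0
      (by rw [finrank_euclideanSpace_fin]; exact hpn) x r
    exact this
  exact setIntegral_mono_set hInt
    (Filter.Eventually.of_forall fun y => Real.rpow_nonneg (norm_nonneg y) p)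
    (HasSubset.Subset.eventuallyLE hsub)

lemma integral_ball_nonneg (x : E) (r : ℝ) {p : ℝ} :
    0 ≤ ∫ y in ball x r, ‖y‖ ^ p :=
  setIntegral_nonneg measurableSet_ball fun y _ => Real.rpow_nonneg (norm_nonneg y) p

end helpers
set_option maxHeartbeats 1000000 in
theorem stmt3 (n : ℕ) (hn : 3 ≤ n) (ε : ℝ) (hε0 : 0 < ε) (hε2 : ε < 2)
    (V : EuclideanSpace ℝ (Fin n) → ℝ) (hV : ∀ x, V x = ‖x‖ ^ (ε - 2))
    (ρ : EuclideanSpace ℝ (Fin n) → ℝ)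
    (hρ : ∀ x, ρ x = sSup {r : ℝ | 0 < r ∧
      r ^ (2 - (n : ℝ)) * ∫ y in ball x r, V y ≤ 1}) :
    ∃ c₁ c₂ R₀ : ℝ, 0 < c₁ ∧ c₁ ≤ c₂ ∧ 1 < R₀ ∧
      ∀ x : EuclideanSpace ℝ (Fin n), R₀ ≤ ‖x‖ →
        c₁ * ‖x‖ ^ (1 - ε / 2) ≤ ρ x ∧ ρ x ≤ c₂ * ‖x‖ ^ (1 - ε / 2) := by
  have hn1 : 1 ≤ n := by omega
  have hnR : (3:ℝ) ≤ (n:ℝ) := by exact_mod_cast hn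
  have hp0 : ε - 2 < 0 := by linarith
  have hpn : -(n:ℝ) < ε - 2 := by linarith
  have htwo : ∀ a : ℝ, a ^ (2:ℝ) = a ^ 2 := fun a => by
    rw [show (2:ℝ) = ((2:ℕ):ℝ) by norm_num, Real.rpow_natCast]
  set ω : ℝ := (volume (ball (0:EuclideanSpace ℝ (Fin n)) 1)).toReal with hωdef
  have hω : 0 < ω := ENNReal.toReal_pos
    (measure_ball_pos volume 0 one_pos).ne' measure_ball_lt_top.ne
  -- constants
  set c₁ : ℝ := min (1/2) (1 / (2 * Real.sqrt (ω+1))) with hc₁def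
  have hsq : Real.sqrt (ω+1) ^ 2 = ω + 1 := Real.sq_sqrt (by linarith)
  have hsqpos : 0 < Real.sqrt (ω+1) := Real.sqrt_pos.2 (by linarith)
  have hc₁pos : 0 < c₁ := lt_min (by norm_num) (by positivity)
  have hc₁half : c₁ ≤ 1/2 := min_le_left _ _
  have hc₁sq : 4 * ω * c₁^2 ≤ 1 := by
    have h1 : c₁ ≤ 1 / (2*Real.sqrt (ω+1)) := min_le_right _ _
    have h2 : c₁^2 ≤ (1 / (2*Real.sqrt (ω+1)))^2 := pow_le_pow_left₀ hc₁pos.le h1 2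
    have h3 : (1 / (2*Real.sqrt (ω+1)))^2 = 1 / (4*(ω+1)) := by
      rw [div_pow, mul_pow, hsq]; norm_num
    rw [h3, le_div_iff₀ (by linarith)] at h2
    have h4 : c₁^2 * (4*(ω+1)) = 4*ω*c₁^2 + 4*c₁^2 := by ring
    rw [h4] at h2
    linarith [sq_nonneg c₁]
  set c₂ : ℝ := max c₁ (3 / (2 * Real.sqrt ω)) with hc₂def
  have hsqω : Real.sqrt ω ^ 2 = ω := Real.sq_sqrt hω.le
  have hsqωpos : 0 < Real.sqrt ω := Real.sqrt_pos.2 hω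
  have hc₂sq : 9/4 ≤ c₂^2 * ω := by
    have h1 : 3 / (2*Real.sqrt ω) ≤ c₂ := le_max_right _ _
    have h2 : (3 / (2*Real.sqrt ω))^2 ≤ c₂^2 := pow_le_pow_left₀ (by positivity) h1 2
    have h3 : (3 / (2*Real.sqrt ω))^2 = 9 / (4*ω) := by
      rw [div_pow, mul_pow, hsqω]; norm_num
    rw [h3, div_le_iff₀ (by linarith)] at h2
    have h4 : c₂^2 * (4*ω) = 4*(c₂^2*ω) := by ring
    rw [h4] at h2
    linarith
  have hc₁₂ : c₁ ≤ c₂ := le_max_left _ _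
  -- kappa constants
  set κ₁ : ℝ := (2:ℝ)^((2:ℝ)-(n:ℝ)) * (3/2:ℝ)^(ε-2) / 2^n * ω with hκ₁def
  set κ₂ : ℝ := (5/4:ℝ)^(ε-2) / 4^n * ω with hκ₂def
  have hκ₁pos : 0 < κ₁ := by
    have := Real.rpow_pos_of_pos (show (0:ℝ) < 2 by norm_num) ((2:ℝ)-(n:ℝ))
    have := Real.rpow_pos_of_pos (show (0:ℝ) < 3/2 by norm_num) (ε-2)
    positivity
  have hκ₂pos : 0 < κ₂ := by
    have := Real.rpow_pos_of_pos (show (0:ℝ) < 5/4 by norm_num) (ε-2)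
    positivity
  set κ : ℝ := min κ₁ (κ₂ * (2:ℝ)^ε) with hκdef
  have hκpos : 0 < κ := lt_min hκ₁pos (by positivity)
  set R₀ : ℝ := max 2 ((2/κ) ^ (ε⁻¹)) with hR₀def
  have hR₀2 : (2:ℝ) ≤ R₀ := le_max_left _ _
  have hR₀1 : (1:ℝ) < R₀ := by linarith
  have hκR : 2 ≤ κ * R₀^ε := by
    have h1 : ((2/κ) ^ (ε⁻¹))^ε = 2/κ := by
      rw [← Real.rpow_mul (by positivity), inv_mul_cancel₀ hε0.ne', Real.rpow_one]
    have h2 : (2:ℝ)/κ ≤ R₀^ε := by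
      rw [← h1]
      exact Real.rpow_le_rpow (by positivity) (le_max_right _ _) hε0.le
    calc (2:ℝ) = κ * (2/κ) := by field_simp
    _ ≤ κ * R₀^ε := by
        exact mul_le_mul_of_nonneg_left h2 hκpos.le
  refine ⟨c₁, c₂, R₀, hc₁pos, hc₁₂, hR₀1, ?_⟩
  intro x hx
  set X : ℝ := ‖x‖ with hXdef
  have hX0 : 0 < X := lt_of_lt_of_le (by linarith) hx
  have hX1 : 1 ≤ X := le_trans (by linarith) hx
  set α : ℝ := 1 - ε/2 with hαdef
  have hXα0 : 0 < X ^ α := Real.rpow_pos_of_pos hX0 α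
  have hXα1 : X ^ α ≤ X := by
    calc X ^ α ≤ X ^ (1:ℝ) :=
      Real.rpow_le_rpow_of_exponent_le hX1 (by rw [hαdef]; linarith)
    _ = X := Real.rpow_one X
  have hXepos : 0 < X ^ ((2:ℝ)-ε) := Real.rpow_pos_of_pos hX0 _
  have hXα2 : (X ^ α)^2 = X ^ ((2:ℝ)-ε) := by
    rw [sq, ← Real.rpow_add hX0]
    congr 1
    rw [hαdef]; ring
  -- the set S
  set S : Set ℝ := {r : ℝ | 0 < r ∧
      r ^ (2 - (n : ℝ)) * ∫ y in ball x r, ‖y‖ ^ (ε-2) ≤ 1} with hSdef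
  have hρx : ρ x = sSup S := by
    rw [hρ x, hSdef]
    congr 1
    ext r
    simp only [Set.mem_setOf_eq, hV]
  -- norm bounds on small balls
  have hDbound : ∀ r : ℝ, r ≤ X/2 → ∀ y ∈ ball x r, X/2 ≤ ‖y‖ ∧ ‖y‖ ≤ (3/2)*X := by
    intro r hr y hy
    have h1 : ‖y - x‖ < r := by simpa [mem_ball, dist_eq_norm] using hy
    have h2 : ‖y‖ ≤ ‖x‖ + ‖y - x‖ := by
      have e : x + (y - x) = y := by abel
      calc ‖y‖ = ‖x + (y - x)‖ := by rw [e]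
      _ ≤ ‖x‖ + ‖y - x‖ := norm_add_le _ _
    have h3 : ‖x‖ - ‖y‖ ≤ ‖y - x‖ := by
      rw [norm_sub_rev]
      exact norm_sub_norm_le x y
    constructor
    · linarith [hX0]
    · linarith
  -- membership of r₁ = c₁ * X ^ α
  have hr₁pos : 0 < c₁ * X ^ α := by positivity
  have hr₁le : c₁ * X ^ α ≤ X/2 := by
    calc c₁ * X ^ α ≤ (1/2) * X := by
          exact mul_le_mul hc₁half hXα1 hXα0.le (by norm_num)
    _ = X/2 := by ring
  have hX2pos : (0:ℝ) < X/2 := by linarith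
  have hmem : c₁ * X ^ α ∈ S := by
    refine ⟨hr₁pos, ?_⟩
    have hIle : ∫ y in ball x (c₁ * X ^ α), ‖y‖ ^ (ε-2)
        ≤ (volume (ball x (c₁ * X ^ α))).toReal * (X/2) ^ (ε-2) := by
      refine integral_ball_le hn hp0 hpn x hX2pos ?_
      intro y hy
      exact (hDbound _ hr₁le y hy).1
    have hvol : (volume (ball x (c₁ * X ^ α))).toReal = (c₁ * X ^ α) ^ n * ω := by
      rw [vol_ball_toReal hn1 x hr₁pos.le, ← hωdef]
    rw [hvol] at hIle
    have hrp : (0:ℝ) < (c₁ * X ^ α) ^ (2 - (n:ℝ)) := Real.rpow_pos_of_pos hr₁pos _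
    have hmul : (c₁ * X ^ α) ^ (2 - (n:ℝ)) * ∫ y in ball x (c₁ * X ^ α), ‖y‖ ^ (ε-2)
        ≤ (c₁ * X ^ α) ^ (2 - (n:ℝ)) * ((c₁ * X ^ α) ^ n * ω * (X/2) ^ (ε-2)) :=
      mul_le_mul_of_nonneg_left hIle hrp.le
    refine le_trans hmul ?_
    -- now the algebra
    have e1 : (c₁ * X ^ α) ^ (2 - (n:ℝ)) * (c₁ * X ^ α) ^ n = (c₁ * X ^ α) ^ (2:ℝ) := by
      rw [← Real.rpow_natCast (c₁ * X ^ α) n, ← Real.rpow_add hr₁pos]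
      norm_num
    have e3 : (X/2) ^ (ε-2) = X ^ (ε-2) * (2:ℝ) ^ ((2:ℝ)-ε) := by
      rw [Real.div_rpow hX0.le (by norm_num), div_eq_mul_inv, ← Real.rpow_neg (by norm_num)]
      congr 1
      ring
    have e4 : X ^ ((2:ℝ)-ε) * X ^ (ε-2) = 1 := by
      rw [← Real.rpow_add hX0]
      norm_num
    have echain : (c₁ * X ^ α) ^ (2 - (n:ℝ)) * ((c₁ * X ^ α) ^ n * ω * (X/2) ^ (ε-2))
        = c₁^2 * (2:ℝ)^((2:ℝ)-ε) * ω * (X ^ ((2:ℝ)-ε) * X ^ (ε-2)) := by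
      calc (c₁ * X ^ α) ^ (2 - (n:ℝ)) * ((c₁ * X ^ α) ^ n * ω * (X/2) ^ (ε-2))
          = ((c₁ * X ^ α) ^ (2 - (n:ℝ)) * (c₁ * X ^ α) ^ n) * ω * (X/2) ^ (ε-2) := by ring
        _ = (c₁ * X ^ α) ^ (2:ℝ) * ω * (X ^ (ε-2) * (2:ℝ) ^ ((2:ℝ)-ε)) := by rw [e1, e3]
        _ = (c₁ * X ^ α) ^ 2 * ω * (X ^ (ε-2) * (2:ℝ) ^ ((2:ℝ)-ε)) := by rw [htwo]
        _ = c₁^2 * (X ^ α)^2 * ω * (X ^ (ε-2) * (2:ℝ) ^ ((2:ℝ)-ε)) := by rw [mul_pow]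
        _ = c₁^2 * X ^ ((2:ℝ)-ε) * ω * (X ^ (ε-2) * (2:ℝ) ^ ((2:ℝ)-ε)) := by rw [hXα2]
        _ = c₁^2 * (2:ℝ)^((2:ℝ)-ε) * ω * (X ^ ((2:ℝ)-ε) * X ^ (ε-2)) := by ring
    rw [echain, e4, mul_one]
    have h24 : (2:ℝ)^((2:ℝ)-ε) ≤ 4 := by
      calc (2:ℝ)^((2:ℝ)-ε) ≤ (2:ℝ)^(2:ℝ) :=
        Real.rpow_le_rpow_of_exponent_le one_le_two (by linarith)
      _ = 4 := by rw [htwo]; norm_num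
    have h2e0 : (0:ℝ) < (2:ℝ)^((2:ℝ)-ε) := Real.rpow_pos_of_pos (by norm_num) _
    have hmm := mul_le_mul_of_nonneg_right h24 (show (0:ℝ) ≤ c₁^2*ω by positivity)
    calc c₁^2 * (2:ℝ)^((2:ℝ)-ε) * ω = (2:ℝ)^((2:ℝ)-ε) * (c₁^2*ω) := by ring
      _ ≤ 4 * (c₁^2*ω) := hmm
      _ = 4 * ω * c₁^2 := by ring
      _ ≤ 1 := hc₁sq
  -- upper bound for all members
  have hub : ∀ r ∈ S, r ≤ c₂ * X ^ α := by
    rintro r ⟨hrpos, hle⟩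
    have hInn : (0:ℝ) ≤ ∫ y in ball x r, ‖y‖ ^ (ε-2) := integral_ball_nonneg x r
    rcases le_or_gt r (X/2) with hcase | hcase
    · -- small r
      have h32X : (0:ℝ) < (3/2)*X := by linarith
      have hIlb : (volume (ball x r)).toReal * ((3/2)*X) ^ (ε-2)
          ≤ ∫ y in ball x r, ‖y‖ ^ (ε-2) := by
        refine le_integral_ball hn hp0 hpn x h32X ?_
        intro y hy
        obtain ⟨h1, h2⟩ := hDbound r hcase y hy
        exact ⟨lt_of_lt_of_le hX2pos h1, h2⟩
      have hvol : (volume (ball x r)).toReal = r ^ n * ω := by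
        rw [vol_ball_toReal hn1 x hrpos.le, ← hωdef]
      rw [hvol] at hIlb
      have hrp : (0:ℝ) < r ^ (2 - (n:ℝ)) := Real.rpow_pos_of_pos hrpos _
      have hchain : r ^ (2 - (n:ℝ)) * (r ^ n * ω * ((3/2)*X) ^ (ε-2)) ≤ 1 :=
        le_trans (mul_le_mul_of_nonneg_left hIlb hrp.le) hle
      have e1 : r ^ (2 - (n:ℝ)) * r ^ n = r ^ (2:ℝ) := by
        rw [← Real.rpow_natCast r n, ← Real.rpow_add hrpos]
        norm_num
      have hchain2 : r ^ 2 * ω * ((3/2)*X) ^ (ε-2) ≤ 1 := by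
        calc r ^ 2 * ω * ((3/2)*X) ^ (ε-2)
            = (r ^ (2 - (n:ℝ)) * r ^ n) * ω * ((3/2)*X) ^ (ε-2) := by rw [e1, htwo]
          _ = r ^ (2 - (n:ℝ)) * (r ^ n * ω * ((3/2)*X) ^ (ε-2)) := by ring
          _ ≤ 1 := hchain
      -- multiply by T = ((3/2)X)^(2-ε)
      have hTpos : (0:ℝ) < ((3/2)*X) ^ ((2:ℝ)-ε) := Real.rpow_pos_of_pos h32X _
      have hT1 : ((3/2)*X) ^ (ε-2) * ((3/2)*X) ^ ((2:ℝ)-ε) = 1 := by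
        rw [← Real.rpow_add h32X]
        norm_num
      have hchain3 : r ^ 2 * ω ≤ ((3/2)*X) ^ ((2:ℝ)-ε) := by
        have := mul_le_mul_of_nonneg_right hchain2 hTpos.le
        calc r ^ 2 * ω = r ^ 2 * ω * (((3/2)*X) ^ (ε-2) * ((3/2)*X) ^ ((2:ℝ)-ε)) := by
              rw [hT1, mul_one]
          _ = r ^ 2 * ω * ((3/2)*X) ^ (ε-2) * ((3/2)*X) ^ ((2:ℝ)-ε) := by ring
          _ ≤ 1 * ((3/2)*X) ^ ((2:ℝ)-ε) := this
          _ = ((3/2)*X) ^ ((2:ℝ)-ε) := by rw [one_mul]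
      have hT2 : ((3/2)*X) ^ ((2:ℝ)-ε) ≤ 9/4 * X ^ ((2:ℝ)-ε) := by
        rw [Real.mul_rpow (by norm_num) hX0.le]
        have h32 : ((3/2):ℝ) ^ ((2:ℝ)-ε) ≤ 9/4 := by
          calc ((3/2):ℝ) ^ ((2:ℝ)-ε) ≤ ((3/2):ℝ) ^ (2:ℝ) :=
            Real.rpow_le_rpow_of_exponent_le (by norm_num) (by linarith)
          _ = 9/4 := by rw [htwo]; norm_num
        exact mul_le_mul_of_nonneg_right h32 hXepos.le
      have hr2 : r ^ 2 ≤ (c₂ * X ^ α)^2 := by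
        have hgoal : (c₂ * X ^ α)^2 = c₂^2 * X ^ ((2:ℝ)-ε) := by rw [mul_pow, hXα2]
        rw [hgoal]
        have h5 : 9/4 * X ^ ((2:ℝ)-ε) ≤ c₂^2*ω * X ^ ((2:ℝ)-ε) :=
          mul_le_mul_of_nonneg_right hc₂sq hXepos.le
        have h6 : r^2 * ω ≤ (c₂^2 * X ^ ((2:ℝ)-ε)) * ω := by
          calc r^2 * ω ≤ ((3/2)*X) ^ ((2:ℝ)-ε) := hchain3
            _ ≤ 9/4 * X ^ ((2:ℝ)-ε) := hT2
            _ ≤ c₂^2*ω * X ^ ((2:ℝ)-ε) := h5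
            _ = (c₂^2 * X ^ ((2:ℝ)-ε)) * ω := by ring
        exact le_of_mul_le_mul_right h6 hω
      exact le_of_pow_le_pow_left₀ two_ne_zero (by positivity) hr2
    · -- large r : contradiction
      exfalso
      have hgt : 2 ≤ r ^ (2 - (n:ℝ)) * ∫ y in ball x r, ‖y‖ ^ (ε-2) := by
        rcases le_or_gt r (2*X) with hcase2 | hcase2
        · -- X/2 < r ≤ 2X
          have h32X : (0:ℝ) < (3/2)*X := by linarith
          have hsub : ball x (X/2) ⊆ ball x r := ball_subset_ball hcase.le
          have hIlb : (volume (ball x (X/2))).toReal * ((3/2)*X) ^ (ε-2)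
              ≤ ∫ y in ball x (X/2), ‖y‖ ^ (ε-2) := by
            refine le_integral_ball hn hp0 hpn x h32X ?_
            intro y hy
            obtain ⟨h1, h2⟩ := hDbound (X/2) le_rfl y hy
            exact ⟨lt_of_lt_of_le hX2pos h1, h2⟩
          have hmono := integral_ball_mono hn hp0 hpn hsub
          have hvol : (volume (ball x (X/2))).toReal = (X/2) ^ n * ω := by
            rw [vol_ball_toReal hn1 x hX2pos.le, ← hωdef]
          rw [hvol] at hIlb
          have hrpow : (2*X) ^ (2 - (n:ℝ)) ≤ r ^ (2 - (n:ℝ)) :=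
            Real.rpow_le_rpow_of_nonpos hrpos hcase2 (by linarith)
          have hIlb2 : (X/2) ^ n * ω * ((3/2)*X) ^ (ε-2)
              ≤ ∫ y in ball x r, ‖y‖ ^ (ε-2) := le_trans hIlb hmono
          have hbig : (2*X) ^ (2 - (n:ℝ)) * ((X/2) ^ n * ω * ((3/2)*X) ^ (ε-2))
              ≤ r ^ (2 - (n:ℝ)) * ∫ y in ball x r, ‖y‖ ^ (ε-2) := by
            refine mul_le_mul hrpow hIlb2 ?_ ?_
            · have := Real.rpow_pos_of_pos h32X (ε-2)
              positivity
            · positivity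
          refine le_trans ?_ hbig
          -- κ₁ * X^ε ≥ κ X^ε ≥ 2 and equality
          have heq : (2*X) ^ (2 - (n:ℝ)) * ((X/2) ^ n * ω * ((3/2)*X) ^ (ε-2))
              = κ₁ * X ^ ε := by
            rw [Real.mul_rpow (by norm_num) hX0.le, Real.mul_rpow (by norm_num) hX0.le,
              div_pow, hκ₁def]
            rw [show (2:ℝ) - (n:ℝ) = (2 - (n:ℝ)) by norm_num]
            rw [show (X:ℝ)^n = X ^ ((n:ℕ):ℝ) from (Real.rpow_natCast X n).symm]
            have ecol : X ^ (2 - (n:ℝ)) * X ^ ((n:ℕ):ℝ) * X ^ (ε-2) = X ^ ε := by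
              rw [← Real.rpow_add hX0, ← Real.rpow_add hX0]
              congr 1
              push_cast
              ring
            calc (2:ℝ) ^ (2 - (n:ℝ)) * X ^ (2 - (n:ℝ))
                  * (X ^ ((n:ℕ):ℝ) / 2^n * ω * ((3/2:ℝ)^(ε-2) * X ^ (ε-2)))
                = ((2:ℝ)^((2:ℝ)-(n:ℝ)) * (3/2:ℝ)^(ε-2) / 2^n * ω)
                  * (X ^ (2 - (n:ℝ)) * X ^ ((n:ℕ):ℝ) * X ^ (ε-2)) := by
                  norm_num
                  ring
              _ = ((2:ℝ)^((2:ℝ)-(n:ℝ)) * (3/2:ℝ)^(ε-2) / 2^n * ω) * X ^ ε := by rw [ecol]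
          rw [heq]
          have hXε : R₀ ^ ε ≤ X ^ ε := Real.rpow_le_rpow (by linarith) hx hε0.le
          have hκκ₁ : κ ≤ κ₁ := min_le_left _ _
          have hXεpos : (0:ℝ) < X ^ ε := Real.rpow_pos_of_pos hX0 _
          have hR₀εpos : (0:ℝ) ≤ R₀ ^ ε := (Real.rpow_pos_of_pos (by linarith) ε).le
          calc (2:ℝ) ≤ κ * R₀ ^ ε := hκR
            _ ≤ κ₁ * X ^ ε := mul_le_mul hκκ₁ hXε hR₀εpos (le_trans hκpos.le hκκ₁)
        · -- r > 2X
          have hX2r : X ≤ r/2 := by linarith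
          set z : EuclideanSpace ℝ (Fin n) := x + (r/(2*X)) • x with hzdef
          have hzx : ‖z - x‖ = r/2 := by
            have e : z - x = (r/(2*X)) • x := by rw [hzdef]; abel
            rw [e, norm_smul, Real.norm_eq_abs, abs_of_pos (by positivity), ← hXdef]
            field_simp
          have hz : ‖z‖ = X + r/2 := by
            have e : z = (1 + r/(2*X)) • x := by rw [hzdef, add_smul, one_smul]
            rw [e, norm_smul, Real.norm_eq_abs, abs_of_pos (by positivity), ← hXdef]
            field_simp
          have hsub : ball z (r/4) ⊆ ball x r := by
            intro y hy
            have h1 : dist y z < r/4 := hy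
            have h2 : dist z x = r/2 := by rw [dist_eq_norm, hzx]
            have := dist_triangle y z x
            rw [mem_ball]
            linarith
          have hbnd : ∀ y ∈ ball z (r/4), 0 < ‖y‖ ∧ ‖y‖ ≤ (5/4)*r := by
            intro y hy
            have h1 : ‖y - z‖ < r/4 := by simpa [mem_ball, dist_eq_norm] using hy
            have h2 : ‖y‖ ≤ ‖z‖ + ‖y - z‖ := by
              have e : z + (y - z) = y := by abel
              calc ‖y‖ = ‖z + (y - z)‖ := by rw [e]
              _ ≤ ‖z‖ + ‖y - z‖ := norm_add_le _ _
            have h3 : ‖z‖ - ‖y‖ ≤ ‖y - z‖ := by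
              rw [norm_sub_rev]
              exact norm_sub_norm_le z y
            rw [hz] at h2 h3
            constructor
            · linarith
            · linarith
          have h54r : (0:ℝ) < (5/4)*r := by linarith
          have hIlb : (volume (ball z (r/4))).toReal * ((5/4)*r) ^ (ε-2)
              ≤ ∫ y in ball z (r/4), ‖y‖ ^ (ε-2) :=
            le_integral_ball hn hp0 hpn z h54r hbnd
          have hmono := integral_ball_mono hn hp0 hpn hsub
          have hvol : (volume (ball z (r/4))).toReal = (r/4) ^ n * ω := by
            rw [vol_ball_toReal hn1 z (by positivity), ← hωdef]
          rw [hvol] at hIlb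
          have hIlb2 : (r/4) ^ n * ω * ((5/4)*r) ^ (ε-2)
              ≤ ∫ y in ball x r, ‖y‖ ^ (ε-2) := le_trans hIlb hmono
          have hrp : (0:ℝ) < r ^ (2 - (n:ℝ)) := Real.rpow_pos_of_pos hrpos _
          have hbig : r ^ (2 - (n:ℝ)) * ((r/4) ^ n * ω * ((5/4)*r) ^ (ε-2))
              ≤ r ^ (2 - (n:ℝ)) * ∫ y in ball x r, ‖y‖ ^ (ε-2) :=
            mul_le_mul_of_nonneg_left hIlb2 hrp.le
          refine le_trans ?_ hbig
          have heq : r ^ (2 - (n:ℝ)) * ((r/4) ^ n * ω * ((5/4)*r) ^ (ε-2))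
              = κ₂ * r ^ ε := by
            rw [Real.mul_rpow (by norm_num) hrpos.le, div_pow, hκ₂def]
            rw [show (r:ℝ)^n = r ^ ((n:ℕ):ℝ) from (Real.rpow_natCast r n).symm]
            have ecol : r ^ (2 - (n:ℝ)) * r ^ ((n:ℕ):ℝ) * r ^ (ε-2) = r ^ ε := by
              rw [← Real.rpow_add hrpos, ← Real.rpow_add hrpos]
              congr 1
              push_cast
              ring
            calc r ^ (2 - (n:ℝ)) * (r ^ ((n:ℕ):ℝ) / 4^n * ω * ((5/4:ℝ)^(ε-2) * r ^ (ε-2)))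
                = ((5/4:ℝ)^(ε-2) / 4^n * ω)
                  * (r ^ (2 - (n:ℝ)) * r ^ ((n:ℕ):ℝ) * r ^ (ε-2)) := by ring
              _ = ((5/4:ℝ)^(ε-2) / 4^n * ω) * r ^ ε := by rw [ecol]
          rw [heq]
          have hrε : (2*X) ^ ε ≤ r ^ ε := Real.rpow_le_rpow (by positivity) hcase2.le hε0.le
          have h2Xε : (2*X) ^ ε = (2:ℝ)^ε * X ^ ε := Real.mul_rpow (by norm_num) hX0.le
          have hXε : R₀ ^ ε ≤ X ^ ε := Real.rpow_le_rpow (by linarith) hx hε0.le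
          have hκκ₂ : κ ≤ κ₂ * (2:ℝ)^ε := min_le_right _ _
          have hR₀εpos : (0:ℝ) ≤ R₀ ^ ε := (Real.rpow_pos_of_pos (by linarith) ε).le
          calc (2:ℝ) ≤ κ * R₀ ^ ε := hκR
            _ ≤ (κ₂ * (2:ℝ)^ε) * X ^ ε :=
                mul_le_mul hκκ₂ hXε hR₀εpos (le_trans hκpos.le hκκ₂)
            _ = κ₂ * ((2:ℝ)^ε * X ^ ε) := by ring
            _ = κ₂ * (2*X) ^ ε := by rw [h2Xε]
            _ ≤ κ₂ * r ^ ε := mul_le_mul_of_nonneg_left hrε hκ₂pos.le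
      linarith
  -- conclude
  have hne : S.Nonempty := ⟨c₁ * X ^ α, hmem⟩
  have hbdd : BddAbove S := ⟨c₂ * X ^ α, fun s hs => hub s hs⟩
  rw [hρx]
  exact ⟨le_csSup hbdd hmem, csSup_le hne hub⟩
end
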